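/- arXiv:1906.02449 — 7 statements merged into one kernel-verified Lean document; each statement's English description precedes it below -/
import Mathlib

section
/- Let X be a normed space and (x_n) a sequence in X. If for every strictly increasing function s : ℕ → ℕ the sequence of partial sums (∑_{i=1}^n x_{s(i)})_n is bounded, then there exists M' > 0 such that for every strictly increasing s : ℕ → ℕ and every n, ‖∑_{i=1}^n x_{s(i)}‖ ≤ M'. -/
/-!
If the sums of `x` over finite sets of indices were unbounded, one could pick finite blocks
`T₀ < T₁ < T₂ < ⋯` of indices, each lying beyond the previous one, with `‖∑_{T k} x‖ > k`
(discarding the indices below a threshold costs only a fixed amount). Running a single subseries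
through all the blocks in order, each block sum is a difference of two of its partial sums, so it
is at most twice their bound: a contradiction. Conversely, a bound `C` on finite-set sums bounds
every partial sum of every subseries.
-/

open Finset

theorem Nat.sum_range_count_nth {M : Type*} [AddCommMonoid M] (p : ℕ → Prop) [DecidablePred p]
    (f : ℕ → M) (n : ℕ) :
    ∑ i ∈ range (Nat.count p n), f (Nat.nth p i) = ∑ m ∈ range n, if p m then f m else 0 := by
  induction n with
  | zero => simp
  | succ n ih =>
    rw [Nat.count_succ, sum_range_succ, ← ih]
    split_ifs with hn
    · rw [sum_range_succ, Nat.nth_count hn]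
    · simp

theorem exists_strictMono_forall_sum_eq_sub {G : Type*} [AddCommGroup G] (x : ℕ → G)
    {b : ℕ → ℕ} {T : ℕ → Finset ℕ} (hT : ∀ k, T k ⊆ Ico (b k) (b (k + 1)))
    (hne : ∀ k, (T k).Nonempty) :
    ∃ s : ℕ → ℕ, StrictMono s ∧ ∀ k, ∃ n n' : ℕ,
      ∑ m ∈ T k, x m = ∑ i ∈ range n', x (s i) - ∑ i ∈ range n, x (s i) := by
  classical
  have hb : StrictMono b := strictMono_nat_of_lt_succ fun k => by
    obtain ⟨m, hm⟩ := hne k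
    have := mem_Ico.mp (hT k hm)
    omega
  set p : ℕ → Prop := fun m => ∃ j, m ∈ T j
  have hp : ∀ k, ∀ m ∈ Ico (b k) (b (k + 1)), p m ↔ m ∈ T k := by
    refine fun k m hm => ⟨fun ⟨j, hj⟩ => ?_, fun hk => ⟨k, hk⟩⟩
    have hmj := mem_Ico.mp (hT j hj)
    have hmk := mem_Ico.mp hm
    obtain rfl : j = k := le_antisymm
      (Nat.lt_succ_iff.mp (hb.lt_iff_lt.mp (hmj.1.trans_lt hmk.2)))
      (Nat.lt_succ_iff.mp (hb.lt_iff_lt.mp (hmk.1.trans_lt hmj.2)))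
    exact hj
  have hinf : {m | p m}.Infinite := Set.infinite_of_forall_exists_gt fun a => by
    obtain ⟨m, hm⟩ := hne (a + 1)
    exact ⟨m, ⟨a + 1, hm⟩, (Nat.lt_succ_self a).trans_le
      (hb.le_apply.trans (mem_Ico.mp (hT _ hm)).1)⟩
  refine ⟨Nat.nth p, Nat.nth_strictMono hinf, fun k =>
    ⟨Nat.count p (b k), Nat.count p (b (k + 1)), ?_⟩⟩
  rw [Nat.sum_range_count_nth, Nat.sum_range_count_nth,
    ← sum_Ico_eq_sub _ (hb (Nat.lt_succ_self k)).le,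
    sum_congr rfl fun m hm => if_congr (hp k m hm) rfl rfl, sum_ite_mem, inter_eq_right.mpr (hT k)]

theorem exists_subset_Ico_lt_norm_sum {E : Type*} [SeminormedAddCommGroup E] {x : ℕ → E}
    (hx : ∀ C : ℝ, ∃ T : Finset ℕ, C < ‖∑ m ∈ T, x m‖) (C : ℝ) (b : ℕ) :
    ∃ N, ∃ T ⊆ Ico b N, C < ‖∑ m ∈ T, x m‖ := by
  obtain ⟨T, hT⟩ := hx (C + ∑ m ∈ range b, ‖x m‖)
  obtain ⟨N, hN⟩ := T.exists_nat_subset_range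
  refine ⟨N, T.filter (b ≤ ·), fun m hm => ?_, ?_⟩
  · obtain ⟨hmT, hbm⟩ := mem_filter.mp hm
    exact mem_Ico.mpr ⟨hbm, mem_range.mp (hN hmT)⟩
  · have hhead : ‖∑ m ∈ T.filter (¬ b ≤ ·), x m‖ ≤ ∑ m ∈ range b, ‖x m‖ :=
      (norm_sum_le _ _).trans <| sum_le_sum_of_subset_of_nonneg
        (fun m hm => mem_range.mpr (not_le.mp (mem_filter.mp hm).2)) fun _ _ _ => norm_nonneg _
    have hsplit := norm_add_le (∑ m ∈ T.filter (b ≤ ·), x m) (∑ m ∈ T.filter (¬ b ≤ ·), x m)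
    rw [sum_filter_add_sum_filter_not] at hsplit
    linarith

theorem exists_blocks_lt_norm_sum {E : Type*} [SeminormedAddCommGroup E] {x : ℕ → E}
    (hx : ∀ C : ℝ, ∃ T : Finset ℕ, C < ‖∑ m ∈ T, x m‖) :
    ∃ b : ℕ → ℕ, ∃ T : ℕ → Finset ℕ,
      (∀ k, T k ⊆ Ico (b k) (b (k + 1))) ∧ ∀ k : ℕ, (k : ℝ) < ‖∑ m ∈ T k, x m‖ := by
  choose N T hTsub hTnorm using fun (k b : ℕ) => exists_subset_Ico_lt_norm_sum hx k b
  let b : ℕ → ℕ := fun k => Nat.rec 0 (fun k bk => N k bk) k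
  exact ⟨b, fun k => T k (b k), fun k => hTsub k (b k), fun k => hTnorm k (b k)⟩

theorem exists_forall_norm_sum_le_of_subseries {E : Type*} [SeminormedAddCommGroup E]
    {x : ℕ → E} (h : ∀ s : ℕ → ℕ, StrictMono s →
      ∃ M : ℝ, ∀ n : ℕ, ‖∑ i ∈ range n, x (s i)‖ ≤ M) :
    ∃ C : ℝ, ∀ T : Finset ℕ, ‖∑ m ∈ T, x m‖ ≤ C := by
  by_contra! hx
  obtain ⟨b, T, hT, hTnorm⟩ := exists_blocks_lt_norm_sum hx
  have hne : ∀ k, (T k).Nonempty := fun k =>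
    nonempty_of_sum_ne_zero (f := x) fun h0 =>
      (hTnorm k).not_ge (by simp [h0])
  obtain ⟨s, hs, hblock⟩ := exists_strictMono_forall_sum_eq_sub x hT hne
  obtain ⟨M, hM⟩ := h s hs
  obtain ⟨k, hk⟩ := exists_nat_gt (2 * M)
  obtain ⟨n, n', hkn⟩ := hblock k
  have hk_lt := hTnorm k
  rw [hkn] at hk_lt
  linarith [norm_sub_le (∑ i ∈ range n', x (s i)) (∑ i ∈ range n, x (s i)), hM n, hM n']

theorem subseries_bounded_uniform_general
    {X : Type*} [NormedAddCommGroup X] (x : ℕ → X)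
    (h : ∀ s : ℕ → ℕ, StrictMono s →
      ∃ M : ℝ, ∀ n : ℕ, ‖∑ i ∈ Finset.range n, x (s i)‖ ≤ M) :
    ∃ M' > (0 : ℝ), ∀ s : ℕ → ℕ, StrictMono s →
      ∀ n : ℕ, ‖∑ i ∈ Finset.range n, x (s i)‖ ≤ M' := by
  obtain ⟨C, hC⟩ := exists_forall_norm_sum_le_of_subseries h
  have hC₀ : 0 ≤ C := by simpa using hC ∅
  refine ⟨C + 1, by linarith, fun s hs n => ?_⟩
  rw [← sum_image hs.injective.injOn]
  linarith [hC (image s (range n))]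

theorem subseries_bounded_uniform
    {X : Type*} [NormedAddCommGroup X] [NormedSpace ℝ X] (x : ℕ → X)
    (h : ∀ s : ℕ → ℕ, StrictMono s →
      ∃ M : ℝ, ∀ n : ℕ, ‖∑ i ∈ Finset.range n, x (s i)‖ ≤ M) :
    ∃ M' > (0 : ℝ), ∀ s : ℕ → ℕ, StrictMono s →
      ∀ n : ℕ, ‖∑ i ∈ Finset.range n, x (s i)‖ ≤ M' :=
  subseries_bounded_uniform_general x h
end

section
/- Let X be a normed space and (x_n) a sequence in X. If for every bijection p : ℕ → ℕ the sequence of partial sums (∑_{i=1}^n x_{p(i)})_n is bounded, then for every strictly increasing s : ℕ → ℕ the sequence (∑_{i=1}^n x_{s(i)})_n is bounded. -/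
/-!
If the partial sums `A n` of the subseries `∑ x (s i)` were unbounded, we could pick indices
`φ 0 < φ 1 < …` with `‖A (φ (k+1)) - A (φ k)‖ > k`. The block `F k = s '' [φ k, φ (k+1))` lies in
`[0, s (φ (k+1)))`, and `G k = [0, s (φ (k+1))) \ F k` is an increasing chain of finite sets
exhausting `ℕ`, so some bijection `p` enumerates each `G k` as an initial segment. Then
`∑_{F k} x = ∑_{j < s (φ (k+1))} x j - ∑_{G k} x` is bounded by the bounds for the identity and for
`p`, a contradiction.
-/

open Finset

def chainEnum (T : ℕ → Finset ℕ) : ℕ → List ℕ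
  | 0 => (T 0).sort (· ≤ ·)
  | k + 1 => chainEnum T k ++ (T (k + 1) \ T k).sort (· ≤ ·)

section chainEnum

variable {T : ℕ → Finset ℕ}

lemma chainEnum_prefix {k l : ℕ} (hkl : k ≤ l) : chainEnum T k <+: chainEnum T l := by
  induction l, hkl using Nat.le_induction with
  | base => exact List.prefix_refl _
  | succ l _ ih => exact ih.trans (List.prefix_append _ _)

lemma coe_chainEnum (hT : Monotone T) (k : ℕ) : (chainEnum T k : Multiset ℕ) = (T k).val := by
  induction k with
  | zero => exact sort_eq _ _
  | succ k ih =>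
    rw [chainEnum, ← Multiset.coe_add, ih, sort_eq, sdiff_val,
      add_tsub_cancel_of_le (val_le_iff.mpr (hT k.le_succ))]

lemma length_chainEnum (hT : Monotone T) (k : ℕ) : (chainEnum T k).length = #(T k) := by
  rw [← Multiset.coe_card, coe_chainEnum hT, card_val]

lemma nodup_chainEnum (hT : Monotone T) (k : ℕ) : (chainEnum T k).Nodup := by
  rw [← Multiset.coe_nodup, coe_chainEnum hT]
  exact (T k).nodup

lemma mem_chainEnum (hT : Monotone T) {k j : ℕ} : j ∈ chainEnum T k ↔ j ∈ T k := by
  rw [← Multiset.mem_coe, coe_chainEnum hT, mem_val]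

lemma exists_lt_card_of_forall_mem (hT : Monotone T) (hcover : ∀ j, ∃ k, j ∈ T k) (n : ℕ) :
    ∃ k, n < #(T k) := by
  choose K hK using hcover
  obtain ⟨k, hk⟩ := ((range (n + 1)).image K).exists_le
  have hsub : range (n + 1) ⊆ T k := fun j hj => hT (hk _ (mem_image_of_mem K hj)) (hK j)
  exact ⟨k, by simpa using card_le_card hsub⟩

theorem exists_bijective_image_range_card_eq (hT : Monotone T) (hcover : ∀ j, ∃ k, j ∈ T k) :
    ∃ p : ℕ → ℕ, p.Bijective ∧ ∀ k, (range #(T k)).image p = T k := by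
  have hlen := length_chainEnum hT
  choose K hK using exists_lt_card_of_forall_mem hT hcover
  let p n := (chainEnum T (K n))[n]'((hlen _).symm ▸ hK n)
  have hp : ∀ k n (hn : n < #(T k)), p n = (chainEnum T k)[n]'((hlen k).symm ▸ hn) := by
    intro k n hn
    rcases le_total (K n) k with h | h
    · exact (chainEnum_prefix h).getElem _
    · exact ((chainEnum_prefix h).getElem _).symm
  have hinj : p.Injective := by
    intro a b hab
    obtain ⟨k, hk⟩ := exists_lt_card_of_forall_mem hT hcover (max a b)
    rwa [hp k a ((le_max_left a b).trans_lt hk), hp k b ((le_max_right a b).trans_lt hk),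
      (nodup_chainEnum hT k).getElem_inj_iff] at hab
  have himage : ∀ k, (range #(T k)).image p = T k := by
    intro k
    refine eq_of_subset_of_card_le (fun j hj => ?_) ?_
    · obtain ⟨n, hn, rfl⟩ := mem_image.mp hj
      rw [hp k n (mem_range.mp hn), ← mem_chainEnum hT]
      exact List.getElem_mem _
    · rw [card_image_of_injective _ hinj, card_range]
  refine ⟨p, ⟨hinj, fun j => ?_⟩, himage⟩
  obtain ⟨k, hk⟩ := hcover j
  rw [← himage k] at hk
  obtain ⟨n, -, hn⟩ := mem_image.mp hk
  exact ⟨n, hn⟩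

end chainEnum

lemma exists_strictMono_lt_norm_sub {E : Type*} [SeminormedAddCommGroup E] {A : ℕ → E}
    (hA : ∀ C : ℝ, ∃ n, C < ‖A n‖) :
    ∃ φ : ℕ → ℕ, StrictMono φ ∧ ∀ k : ℕ, (k : ℝ) < ‖A (φ (k + 1)) - A (φ k)‖ := by
  have hnext : ∀ m, ∃ n, m < n ∧ ‖A m‖ + m < ‖A n‖ := by
    intro m
    -- `n > m` because `‖A n‖` exceeds the sum of all `‖A i‖` with `i ≤ m`
    obtain ⟨n, hn⟩ := hA (max (‖A m‖ + m) (∑ i ∈ range (m + 1), ‖A i‖))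
    refine ⟨n, ?_, (le_max_left _ _).trans_lt hn⟩
    by_contra! hnm
    have := single_le_sum (fun i _ => norm_nonneg (A i)) (mem_range.mpr (Nat.lt_succ_of_le hnm))
    exact (hn.trans_le this).not_ge (le_max_right _ _)
  choose g hg_gt hg_norm using hnext
  have hsucc : ∀ k, g^[k + 1] 0 = g (g^[k] 0) := fun k => Function.iterate_succ_apply' g k 0
  have hφ : StrictMono fun k => g^[k] 0 := strictMono_nat_of_lt_succ fun k => hsucc k ▸ hg_gt _
  refine ⟨_, hφ, fun k => ?_⟩
  calc (k : ℝ) ≤ g^[k] 0 := by exact_mod_cast hφ.id_le k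
    _ < ‖A (g^[k + 1] 0)‖ - ‖A (g^[k] 0)‖ := by rw [hsucc]; linarith [hg_norm (g^[k] 0)]
    _ ≤ ‖A (g^[k + 1] 0) - A (g^[k] 0)‖ := norm_sub_norm_le _ _

def outsideBlock (s : ℕ → ℕ) (a b : ℕ) : Finset ℕ := range (s b) \ (Ico a b).image s

lemma norm_sum_Ico_comp_le {E : Type*} [SeminormedAddCommGroup E] (x : ℕ → E) {s : ℕ → ℕ}
    (hs : StrictMono s) (a b : ℕ) :
    ‖∑ i ∈ Ico a b, x (s i)‖ ≤ ‖∑ j ∈ range (s b), x j‖ + ‖∑ j ∈ outsideBlock s a b, x j‖ := by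
  have hsub : (Ico a b).image s ⊆ range (s b) := by
    intro j hj
    obtain ⟨i, hi, rfl⟩ := mem_image.mp hj
    exact mem_range.mpr (hs (mem_Ico.mp hi).2)
  rw [← sum_image hs.injective.injOn, outsideBlock, sum_sdiff_eq_sub hsub]
  exact norm_le_insert _ _

lemma range_subset_outsideBlock {s : ℕ → ℕ} (hs : Monotone s) {b c : ℕ} (hbc : b ≤ c) :
    range (s b) ⊆ outsideBlock s b c := by
  intro j hj
  refine mem_sdiff.mpr ⟨range_subset_range.mpr (hs hbc) hj, fun hj' => ?_⟩
  obtain ⟨i, hi, rfl⟩ := mem_image.mp hj'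
  exact (mem_range.mp hj).not_ge (hs (mem_Ico.mp hi).1)

lemma monotone_outsideBlock {s φ : ℕ → ℕ} (hs : Monotone s) (hφ : Monotone φ) :
    Monotone fun k => outsideBlock s (φ k) (φ (k + 1)) :=
  monotone_nat_of_le_succ fun k =>
    sdiff_subset.trans (range_subset_outsideBlock hs (hφ (k + 1).le_succ))

theorem rearrangements_bounded_implies_subseries_bounded_general
    {X : Type*} [NormedAddCommGroup X] (x : ℕ → X)
    (h : ∀ p : ℕ → ℕ, Function.Bijective p →
      ∃ M : ℝ, ∀ n : ℕ, ‖∑ i ∈ Finset.range n, x (p i)‖ ≤ M) :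
    ∀ s : ℕ → ℕ, StrictMono s →
      ∃ M : ℝ, ∀ n : ℕ, ‖∑ i ∈ Finset.range n, x (s i)‖ ≤ M := by
  intro s hs
  by_contra! hunbounded
  obtain ⟨φ, hφ, hjump⟩ := exists_strictMono_lt_norm_sub hunbounded
  have hcover (j : ℕ) : ∃ k, j ∈ outsideBlock s (φ k) (φ (k + 1)) :=
    ⟨j + 1, range_subset_outsideBlock hs.monotone (hφ.monotone (j + 1).le_succ)
      (mem_range.mpr ((hs.comp hφ).id_le (j + 1)))⟩
  obtain ⟨p, hp, hpT⟩ :=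
    exists_bijective_image_range_card_eq (monotone_outsideBlock hs.monotone hφ.monotone) hcover
  obtain ⟨M₀, hM₀⟩ := h id Function.bijective_id
  obtain ⟨M, hM⟩ := h p hp
  obtain ⟨k, hk⟩ := exists_nat_gt (M₀ + M)
  have : (k : ℝ) < M₀ + M := calc
    (k : ℝ) < ‖∑ i ∈ range (φ (k + 1)), x (s i) - ∑ i ∈ range (φ k), x (s i)‖ := hjump k
    _ = ‖∑ i ∈ Ico (φ k) (φ (k + 1)), x (s i)‖ := by rw [sum_Ico_eq_sub _ (hφ.monotone k.le_succ)]
    _ ≤ ‖∑ j ∈ range (s (φ (k + 1))), x j‖ + ‖∑ j ∈ outsideBlock s (φ k) (φ (k + 1)), x j‖ :=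
      norm_sum_Ico_comp_le x hs _ _
    _ ≤ M₀ + M := by
      rw [← hpT k, sum_image hp.injective.injOn]
      exact add_le_add (hM₀ _) (hM _)
  linarith

theorem rearrangements_bounded_implies_subseries_bounded
    {X : Type*} [NormedAddCommGroup X] [NormedSpace ℝ X] (x : ℕ → X)
    (h : ∀ p : ℕ → ℕ, Function.Bijective p →
      ∃ M : ℝ, ∀ n : ℕ, ‖∑ i ∈ Finset.range n, x (p i)‖ ≤ M) :
    ∀ s : ℕ → ℕ, StrictMono s →
      ∃ M : ℝ, ∀ n : ℕ, ‖∑ i ∈ Finset.range n, x (s i)‖ ≤ M :=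
  rearrangements_bounded_implies_subseries_bounded_general x h
end

section
/- Let X be a normed space and (x_n) a sequence in X. Suppose there exists a strictly increasing s' : ℕ → ℕ such that the partial sums of ∑ x_{s'(n)} are unbounded. Then for each m ∈ ℕ, the set A_m = {s ∈ S : ‖∑_{i=1}^n x_{s(i)}‖ ≤ m for all n} has empty interior in S, and hence is nowhere dense. -/
/-- `S`, the Polish space of strictly increasing functions `ℕ → ℕ`,
as a subspace of the product space `ℕ → ℕ`. -/
abbrev IncSeq : Type := {s : ℕ → ℕ // StrictMono s}

/-!
A basic neighbourhood of `s ∈ S` only fixes an initial segment `s 0, …, s (N - 1)`. Continuing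
that segment by the tail of `s'` starting at index `s N` stays strictly increasing, and the partial
sums along the new sequence differ from a tail of the partial sums along `s'` by a fixed vector,
so they are unbounded. Hence the set of `s` with bounded partial sums, which contains every `A_m`,
has empty interior; `A_m` is moreover closed, each of its defining conditions involving finitely
many coordinates.
-/

open Finset Topology PiNat

section PartialSums

variable {E : Type*} [SeminormedAddCommGroup E]

def BddPartialSums (f : ℕ → E) : Prop :=
  ∃ M : ℝ, ∀ n, ‖∑ i ∈ range n, f i‖ ≤ M

theorem bddPartialSums_iff_of_shift {f g : ℕ → E} {N : ℕ} (h : ∀ i, f (N + i) = g i) :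
    BddPartialSums f ↔ BddPartialSums g := by
  have hsplit : ∀ n, ∑ i ∈ range (N + n), f i = ∑ i ∈ range N, f i + ∑ i ∈ range n, g i :=
    fun n => by simp only [sum_range_add, h]
  constructor
  · rintro ⟨M, hM⟩
    refine ⟨M + ‖∑ i ∈ range N, f i‖, fun n => ?_⟩
    calc ‖∑ i ∈ range n, g i‖
        = ‖∑ i ∈ range (N + n), f i - ∑ i ∈ range N, f i‖ := by rw [hsplit, add_sub_cancel_left]
      _ ≤ M + ‖∑ i ∈ range N, f i‖ := (norm_sub_le _ _).trans (by gcongr; exact hM _)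
  · rintro ⟨M, hM⟩
    set C := ∑ j ∈ range (N + 1), ‖∑ i ∈ range j, f i‖
    have hC : ∀ j ≤ N, ‖∑ i ∈ range j, f i‖ ≤ C := fun j hj =>
      single_le_sum (f := fun j => ‖∑ i ∈ range j, f i‖) (fun _ _ => norm_nonneg _)
        (mem_range.2 (Nat.lt_succ_of_le hj))
    have hM0 : 0 ≤ M := by simpa using hM 0
    refine ⟨C + M, fun n => ?_⟩
    rcases le_or_gt n N with hn | hn
    · linarith [hC n hn]
    · obtain ⟨k, rfl⟩ := Nat.exists_eq_add_of_le hn.le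
      calc ‖∑ i ∈ range (N + k), f i‖
          ≤ ‖∑ i ∈ range N, f i‖ + ‖∑ i ∈ range k, g i‖ := by rw [hsplit]; exact norm_add_le _ _
        _ ≤ C + M := add_le_add (hC N le_rfl) (hM k)

theorem isClosed_setOf_forall_norm_partialSum_le (x : ℕ → E) (r : ℝ) :
    IsClosed {s : ℕ → ℕ | ∀ n, ‖∑ i ∈ range n, x (s i)‖ ≤ r} := by
  simp only [Set.ofPred_forall]
  refine isClosed_iInter fun n => isClosed_le ?_ continuous_const
  exact continuous_norm.comp <| continuous_finsetSum _ fun i _ =>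
    continuous_of_discreteTopology.comp (continuous_apply i)

end PartialSums

def splice (s t : ℕ → ℕ) (N : ℕ) : ℕ → ℕ := fun i => if i < N then s i else t (i - N)

theorem splice_mem_cylinder (s t : ℕ → ℕ) (N : ℕ) : splice s t N ∈ cylinder s N :=
  fun _ hi => if_pos hi

theorem splice_add (s t : ℕ → ℕ) (N i : ℕ) : splice s t N (N + i) = t i := by
  simp [splice]

theorem strictMono_splice {s t : ℕ → ℕ} {N : ℕ} (hs : StrictMono s) (ht : StrictMono t)
    (hst : ∀ i < N, s i < t 0) : StrictMono (splice s t N) := by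
  refine strictMono_nat_of_lt_succ fun i => ?_
  unfold splice
  split_ifs with h₁ h₂ h₂
  · exact hs i.lt_succ_self
  · exact (hst i h₁).trans_le (ht.monotone (Nat.zero_le _))
  · omega
  · exact ht (by omega)

theorem PiNat.exists_cylinder_subset_of_mem_nhds {E : ℕ → Type*} [∀ n, TopologicalSpace (E n)]
    [∀ n, DiscreteTopology (E n)] {x : ∀ n, E n} {U : Set (∀ n, E n)} (hU : U ∈ 𝓝 x) :
    ∃ N, cylinder x N ⊆ U := by
  obtain ⟨_, ⟨y, N, rfl⟩, hx, hsub⟩ := (isTopologicalBasis_cylinders E).mem_nhds_iff.1 hU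
  exact ⟨N, by rwa [mem_cylinder_iff_eq.1 hx]⟩

section

variable {E : Type*} [SeminormedAddCommGroup E] (x : ℕ → E) {s' : ℕ → ℕ}

theorem exists_mem_cylinder_not_bddPartialSums (hs' : StrictMono s')
    (hub : ¬ BddPartialSums fun i => x (s' i)) (s : IncSeq) (N : ℕ) :
    ∃ t : IncSeq, t.1 ∈ cylinder s.1 N ∧ ¬ BddPartialSums fun i => x (t.1 i) := by
  set tail : ℕ → ℕ := fun i => s' (s.1 N + i)
  have htail : StrictMono tail := hs'.comp (strictMono_id.const_add _)
  have hjoin : ∀ i < N, s.1 i < tail 0 := fun i hi =>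
    (s.2 hi).trans_le ((Nat.le_add_right _ _).trans hs'.le_apply)
  refine ⟨⟨splice s.1 tail N, strictMono_splice s.2 htail hjoin⟩,
    splice_mem_cylinder s.1 tail N, ?_⟩
  have hsplice : BddPartialSums (fun i => x (splice s.1 tail N i)) ↔
      BddPartialSums fun i => x (tail i) :=
    bddPartialSums_iff_of_shift fun i => by rw [splice_add]
  have hshift : BddPartialSums (fun i => x (s' i)) ↔ BddPartialSums fun i => x (tail i) :=
    bddPartialSums_iff_of_shift fun _ => rfl
  exact (hsplice.trans hshift.symm).not.2 hub

theorem interior_setOf_bddPartialSums_eq_empty (hs' : StrictMono s')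
    (hub : ¬ BddPartialSums fun i => x (s' i)) :
    interior {s : IncSeq | BddPartialSums fun i => x (s.1 i)} = ∅ := by
  refine Set.eq_empty_iff_forall_notMem.2 fun s hs => ?_
  obtain ⟨U, hU, hUsub⟩ := mem_nhds_induced _ _ _ |>.1 (mem_interior_iff_mem_nhds.1 hs)
  obtain ⟨N, hN⟩ := exists_cylinder_subset_of_mem_nhds hU
  obtain ⟨t, htN, ht⟩ := exists_mem_cylinder_not_bddPartialSums x hs' hub s N
  exact ht (hUsub (hN htN))

end

theorem Am_nowhere_dense_general
    {X : Type*} [NormedAddCommGroup X] (x : ℕ → X)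
    (s' : ℕ → ℕ) (hs' : StrictMono s')
    (hub : ¬ ∃ M : ℝ, ∀ n : ℕ, ‖∑ i ∈ Finset.range n, x (s' i)‖ ≤ M)
    (m : ℕ) :
    interior {s : IncSeq | ∀ n : ℕ, ‖∑ i ∈ Finset.range n, x (s.1 i)‖ ≤ (m : ℝ)} = ∅ ∧
    IsNowhereDense {s : IncSeq | ∀ n : ℕ, ‖∑ i ∈ Finset.range n, x (s.1 i)‖ ≤ (m : ℝ)} := by
  have hint : interior {s : IncSeq | ∀ n : ℕ, ‖∑ i ∈ range n, x (s.1 i)‖ ≤ (m : ℝ)} = ∅ :=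
    Set.subset_empty_iff.1 <| interior_setOf_bddPartialSums_eq_empty x hs' hub ▸
      interior_mono fun s hs => ⟨m, hs⟩
  have hclosed : IsClosed {s : IncSeq | ∀ n : ℕ, ‖∑ i ∈ range n, x (s.1 i)‖ ≤ (m : ℝ)} :=
    (isClosed_setOf_forall_norm_partialSum_le x m).preimage continuous_subtype_val
  exact ⟨hint, hclosed.isNowhereDense_iff.2 hint⟩

theorem Am_nowhere_dense
    {X : Type*} [NormedAddCommGroup X] [NormedSpace ℝ X] (x : ℕ → X)
    (s' : ℕ → ℕ) (hs' : StrictMono s')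
    (hub : ¬ ∃ M : ℝ, ∀ n : ℕ, ‖∑ i ∈ Finset.range n, x (s' i)‖ ≤ M)
    (m : ℕ) :
    interior {s : IncSeq | ∀ n : ℕ, ‖∑ i ∈ Finset.range n, x (s.1 i)‖ ≤ (m : ℝ)} = ∅ ∧
    IsNowhereDense {s : IncSeq | ∀ n : ℕ, ‖∑ i ∈ Finset.range n, x (s.1 i)‖ ≤ (m : ℝ)} :=
  Am_nowhere_dense_general x s' hs' hub m
end

section
/- Let I be an ideal on ℕ (containing all finite sets, proper, closed under subsets and finite unions). If I has the Baire property as a subset of the Cantor space {0,1}^ℕ (identifying subsets of ℕ with their characteristic functions), then there is a strictly increasing sequence n_1 < n_2 < ⋯ in ℕ such that no member of I contains infinitely many of the intervals [n_i, n_{i+1}) ∩ ℕ. -/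
/-!
Identify subsets of `ℕ` with points of the Cantor space `ℕ → Bool` and let `T` be the image of `I`.
As `I` contains the finite sets and is closed under subsets and finite unions, `T` is invariant
under finite modifications, so by the topological zero-one law (translate by finitely supported
masks) it is meagre or comeagre. It is not comeagre, since complementation is a homeomorphism
mapping `T` into its complement. Hence `T` misses the intersection of dense open sets
`W₀ ⊇ W₁ ⊇ ⋯`. By compactness, for each `i` and `n` there is an `m` such that every pattern below
`n` can be completed on `[n, m)` to a cylinder inside `Wᵢ`; iterating gives the endpoints `e`.
If `A` contains infinitely many intervals `[e i, e (i + 1))`, then filling such intervals shows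
that each `Wᵢ` has dense preimage under `t ↦ t ∩ A`, and Baire's theorem yields a subset of `A`
outside `T`, so `A ∉ I`.
-/

open Set Filter Topology PiNat

/-- An ideal `I` on `ℕ` has the Baire property if the corresponding set of
characteristic functions is Baire measurable in the Cantor space `ℕ → Bool`. -/
def IdealHasBaireProperty (I : Set (Set ℕ)) : Prop :=
  BaireMeasurableSet {t : ℕ → Bool | {n : ℕ | t n = true} ∈ I}

section Cylinders

variable {E : ℕ → Type*} [∀ n, TopologicalSpace (E n)] [∀ n, DiscreteTopology (E n)]

theorem exists_cylinder_subset {U : Set (∀ n, E n)} (hU : IsOpen U) {x : ∀ n, E n}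
    (hx : x ∈ U) : ∃ n, cylinder x n ⊆ U := by
  obtain ⟨_, ⟨y, n, rfl⟩, hxy, hyU⟩ :=
    (isTopologicalBasis_cylinders E).exists_subset_of_mem_open hx hU
  exact ⟨n, mem_cylinder_iff_eq.1 hxy ▸ hyU⟩

theorem exists_forall_exists_cylinder_subset [CompactSpace (∀ n, E n)] {W : Set (∀ n, E n)}
    (hWo : IsOpen W) (hWd : Dense W) (n : ℕ) :
    ∃ m, ∀ s, ∃ τ ∈ cylinder s n, cylinder τ m ⊆ W := by
  set O : ℕ → Set (∀ n, E n) := fun m => {s | ∃ τ ∈ cylinder s n, cylinder τ m ⊆ W}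
  have hO_open : ∀ m, IsOpen (O m) := fun m => isOpen_iff_forall_mem_open.2
    fun s ⟨τ, hτs, hτW⟩ => ⟨cylinder s n, fun s' hs' => ⟨τ, mem_cylinder_iff_eq.1 hs' ▸ hτs, hτW⟩,
      isOpen_cylinder E s n, self_mem_cylinder s n⟩
  have hO_mono : Monotone O := fun m m' hmm' s ⟨τ, hτs, hτW⟩ =>
    ⟨τ, hτs, (cylinder_anti τ hmm').trans hτW⟩
  have hO_cover : univ ⊆ ⋃ m, O m := by
    intro s _
    obtain ⟨τ, hτs, hτW⟩ :=
      hWd.inter_open_nonempty _ (isOpen_cylinder E s n) ⟨s, self_mem_cylinder s n⟩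
    obtain ⟨m, hm⟩ := exists_cylinder_subset hWo hτW
    exact mem_iUnion.2 ⟨m, τ, hτs, hm⟩
  obtain ⟨m, hm⟩ := isCompact_univ.elim_directed_cover O hO_open hO_cover hO_mono.directed_le
  exact ⟨m, fun s => hm (mem_univ s)⟩

theorem exists_strictMono_forall_exists_cylinder_subset [CompactSpace (∀ n, E n)]
    {W : ℕ → Set (∀ n, E n)} (hWo : ∀ i, IsOpen (W i)) (hWd : ∀ i, Dense (W i)) :
    ∃ e : ℕ → ℕ, StrictMono e ∧ ∀ i s, ∃ τ ∈ cylinder s (e i), cylinder τ (e (i + 1)) ⊆ W i := by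
  choose m hm using fun i => exists_forall_exists_cylinder_subset (hWo i) (hWd i)
  set e : ℕ → ℕ := fun i => Nat.rec 0 (fun i ei => max (ei + 1) (m i ei)) i
  have he_succ : ∀ i, e (i + 1) = max (e i + 1) (m i (e i)) := fun i => rfl
  refine ⟨e, strictMono_nat_of_lt_succ fun i => by rw [he_succ]; omega, fun i s => ?_⟩
  obtain ⟨τ, hτs, hτW⟩ := hm i (e i) s
  exact ⟨τ, hτs, (cylinder_anti τ (by rw [he_succ]; omega)).trans hτW⟩

end Cylinders

theorem not_isMeagre_compl_of_disjoint_preimage {X : Type*} [TopologicalSpace X] [BaireSpace X]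
    [Nonempty X] {f : X → X} (hc : Continuous f) (ho : IsOpenMap f) {S : Set X}
    (hS : Disjoint S (f ⁻¹' S)) : ¬ IsMeagre Sᶜ := by
  intro hS_comeagre
  have hS_res : S ∈ residual X := by simpa [IsMeagre] using hS_comeagre
  have h_res : S ∩ f ⁻¹' S ∈ residual X :=
    inter_mem hS_res (tendsto_residual_of_isOpenMap hc ho hS_res)
  rw [hS.inter_eq] at h_res
  exact not_nonempty_empty (dense_of_mem_residual h_res).nonempty

def xorHomeomorph (c : ℕ → Bool) : (ℕ → Bool) ≃ₜ (ℕ → Bool) where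
  toFun t k := xor (t k) (c k)
  invFun t k := xor (t k) (c k)
  left_inv t := by funext k; simp
  right_inv t := by funext k; simp
  continuous_toFun := continuous_pi fun k =>
    (continuous_of_discreteTopology (f := fun b => xor b (c k))).comp (continuous_apply k)
  continuous_invFun := continuous_pi fun k =>
    (continuous_of_discreteTopology (f := fun b => xor b (c k))).comp (continuous_apply k)

@[simp]
theorem xorHomeomorph_apply (c t : ℕ → Bool) (k : ℕ) : xorHomeomorph c t k = xor (t k) (c k) :=
  rfl

def IsTailSet (S : Set (ℕ → Bool)) : Prop :=
  ∀ ⦃t t' : ℕ → Bool⦄, {n | t n ≠ t' n}.Finite → t ∈ S → t' ∈ S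

namespace IsTailSet

variable {S : Set (ℕ → Bool)}

theorem compl (hS : IsTailSet S) : IsTailSet Sᶜ := fun t t' h ht ht' =>
  ht (hS (by simpa only [ne_comm] using h) ht')

theorem preimage_xorHomeomorph (hS : IsTailSet S) {c : ℕ → Bool} (hc : {n | c n = true}.Finite) :
    xorHomeomorph c ⁻¹' S = S := by
  have hdiff : ∀ t, {n | t n ≠ xorHomeomorph c t n} = {n | c n = true} := by
    intro t; ext n
    simp only [mem_ofPred_eq, xorHomeomorph_apply]
    cases t n <;> cases c n <;> decide
  ext t
  exact ⟨fun h => hS (by simpa only [ne_comm, hdiff] using hc) h,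
    fun h => hS (hdiff t ▸ hc) h⟩

theorem isMeagre_of_isMeagre_inter (hS : IsTailSet S) {U : Set (ℕ → Bool)} (hUo : IsOpen U)
    (hU : U.Nonempty) (hSU : IsMeagre (S ∩ U)) : IsMeagre S := by
  obtain ⟨t₀, ht₀⟩ := hU
  obtain ⟨m, hm⟩ := exists_cylinder_subset hUo ht₀
  let c : Finset ℕ → ℕ → Bool := fun F k => decide (k ∈ F)
  have hc : ∀ F, {n | c F n = true}.Finite := fun F => by simp [c]
  have hcover : S ⊆ ⋃ F : Finset ℕ, xorHomeomorph (c F) ⁻¹' (S ∩ U) := by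
    intro t ht
    -- flipping the coordinates below `m` where `t` and `t₀` differ moves `t` into `U`
    refine mem_iUnion.2 ⟨(Finset.range m).filter fun k => t k ≠ t₀ k, ?_, hm ?_⟩
    · rw [← hS.preimage_xorHomeomorph (hc _)] at ht
      exact ht
    · intro k hk
      cases h : t k <;> cases h₀ : t₀ k <;> simp [c, hk, h, h₀]
  exact (isMeagre_iUnion fun F => hSU.preimage_of_isOpenMap (xorHomeomorph (c F)).continuous
    (xorHomeomorph (c F)).isOpenMap).mono hcover

theorem isMeagre_or_isMeagre_compl (hS : IsTailSet S) (hBM : BaireMeasurableSet S) :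
    IsMeagre S ∨ IsMeagre Sᶜ := by
  obtain ⟨U, hUo, hSU⟩ := hBM.residualEq_isOpen
  have hSU' : ∀ᶠ x in residual _, x ∈ S ↔ x ∈ U := eventuallyEq_set.1 hSU
  rcases U.eq_empty_or_nonempty with rfl | hU
  · exact Or.inl (mem_of_superset hSU' fun x hx hxS => (hx.1 hxS).elim)
  · refine Or.inr (hS.compl.isMeagre_of_isMeagre_inter hUo hU ?_)
    exact mem_of_superset hSU' fun x hx ⟨hxS, hxU⟩ => hxS (hx.2 hxU)

end IsTailSet

section Ideal

variable {I : Set (Set ℕ)}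

theorem isTailSet_setOf_mem (hUnion : ∀ A B : Set ℕ, A ∈ I → B ∈ I → A ∪ B ∈ I)
    (hSub : ∀ A B : Set ℕ, A ⊆ B → B ∈ I → A ∈ I) (hFin : ∀ A : Set ℕ, A.Finite → A ∈ I) :
    IsTailSet {t : ℕ → Bool | {n | t n = true} ∈ I} := by
  intro t t' hfin ht
  refine hSub _ _ (fun n hn => ?_) (hUnion _ _ ht (hFin _ hfin))
  by_cases h : t n = t' n
  · exact Or.inl (h.trans hn)
  · exact Or.inr h

theorem disjoint_preimage_xorHomeomorph_true (hUnion : ∀ A B : Set ℕ, A ∈ I → B ∈ I → A ∪ B ∈ I)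
    (hProper : (Set.univ : Set ℕ) ∉ I) :
    Disjoint {t : ℕ → Bool | {n | t n = true} ∈ I}
      (xorHomeomorph (fun _ => true) ⁻¹' {t | {n | t n = true} ∈ I}) := by
  refine disjoint_left.2 fun t ht htc => hProper ?_
  have hcompl : {n | xorHomeomorph (fun _ => true) t n = true} = {n | t n = true}ᶜ := by
    ext n; simp
  rw [← union_compl_self {n | t n = true}]
  exact hUnion _ _ ht (hcompl ▸ htc)

end Ideal

theorem exists_antitone_dense_isOpen_iInter_subset {X : Type*} [TopologicalSpace X] [BaireSpace X]
    {S : Set X} (hS : S ∈ residual X) :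
    ∃ W : ℕ → Set X, (∀ i, IsOpen (W i)) ∧ (∀ i, Dense (W i)) ∧ Antitone W ∧ ⋂ i, W i ⊆ S := by
  obtain ⟨𝒮, h𝒮o, h𝒮d, h𝒮c, h𝒮S⟩ := mem_residual_iff.1 hS
  obtain ⟨V, hV⟩ := (h𝒮c.insert univ).exists_eq_range (insert_nonempty _ _)
  have hV_mem : ∀ k, IsOpen (V k) ∧ Dense (V k) := by
    intro k
    rcases (hV ▸ mem_range_self k : V k ∈ insert univ 𝒮) with h | h
    · exact h ▸ ⟨isOpen_univ, dense_univ⟩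
    · exact ⟨h𝒮o _ h, h𝒮d _ h⟩
  refine ⟨fun i => ⋂₀ (V '' Iic i), fun i => ((finite_Iic i).image V).isOpen_sInter ?_,
    fun i => ((finite_Iic i).image V).dense_sInter ?_ ?_,
    fun i j hij => sInter_subset_sInter (image_mono (Iic_subset_Iic.2 hij)), ?_⟩
  · exact forall_mem_image.2 fun k _ => (hV_mem k).1
  · exact forall_mem_image.2 fun k _ => (hV_mem k).1
  · exact forall_mem_image.2 fun k _ => (hV_mem k).2
  · intro x hx
    refine h𝒮S fun t ht => ?_
    obtain ⟨k, rfl⟩ : t ∈ range V := hV ▸ mem_insert_of_mem _ ht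
    exact mem_iInter.1 hx k _ (mem_image_of_mem V self_mem_Iic)

theorem IsMeagre.exists_strictMono_notMem_of_infinite {T : Set (ℕ → Bool)} (hT : IsMeagre T) :
    ∃ e : ℕ → ℕ, StrictMono e ∧ ∀ A : Set ℕ, {i | Ico (e i) (e (i + 1)) ⊆ A}.Infinite →
      ∃ t ∉ T, {n | t n = true} ⊆ A := by
  classical
  obtain ⟨W, hWo, hWd, hW_anti, hWT⟩ := exists_antitone_dense_isOpen_iInter_subset hT
  obtain ⟨e, he_mono, he⟩ := exists_strictMono_forall_exists_cylinder_subset hWo hWd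
  refine ⟨e, he_mono, fun A hA => ?_⟩
  let φ : (ℕ → Bool) → (ℕ → Bool) := fun t k => t k && decide (k ∈ A)
  have hφ : Continuous φ := continuous_pi fun k =>
    (continuous_of_discreteTopology (f := fun b => b && decide (k ∈ A))).comp (continuous_apply k)
  have hdense : ∀ i, Dense (φ ⁻¹' W i) := by
    intro i
    refine (isTopologicalBasis_cylinders _).dense_iff.2 ?_
    rintro _ ⟨s, n, rfl⟩ -
    obtain ⟨j, hjA, hj⟩ := hA.exists_gt (max i n)
    obtain ⟨τ, hτ, hτW⟩ := he j (φ s)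
    let t : ℕ → Bool := fun k => if k < e j then s k else τ k
    refine ⟨t, fun k hk => if_pos (hk.trans_le ?_), hW_anti (le_of_max_le_left hj.le) (hτW ?_)⟩
    · exact (le_of_max_le_right hj.le).trans he_mono.le_apply
    · intro k hk
      by_cases hkj : k < e j
      · simp [φ, t, hkj, hτ k hkj]
      · have hkA : k ∈ A := hjA ⟨not_lt.1 hkj, hk⟩
        simp [φ, t, hkj, hkA]
  obtain ⟨t, ht⟩ := (dense_iInter_of_isOpen_nat (fun i => (hWo i).preimage hφ) hdense).nonempty
  refine ⟨φ t, hWT (mem_iInter.2 fun i => mem_iInter.1 ht i), fun n hn => ?_⟩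
  simp only [φ, mem_ofPred_eq, Bool.and_eq_true, decide_eq_true_eq] at hn
  exact hn.2

theorem talagrand_characterisation_general (I : Set (Set ℕ))
    (hUnion : ∀ A B : Set ℕ, A ∈ I → B ∈ I → A ∪ B ∈ I)
    (hSub : ∀ A B : Set ℕ, A ⊆ B → B ∈ I → A ∈ I)
    (hProper : (Set.univ : Set ℕ) ∉ I)
    (hFin : ∀ A : Set ℕ, A.Finite → A ∈ I)
    (hBP : IdealHasBaireProperty I) :
    ∃ e : ℕ → ℕ, StrictMono e ∧
      ∀ A ∈ I, {i : ℕ | Set.Ico (e i) (e (i + 1)) ⊆ A}.Finite := by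
  have hT_meagre : IsMeagre {t : ℕ → Bool | {n | t n = true} ∈ I} :=
    ((isTailSet_setOf_mem hUnion hSub hFin).isMeagre_or_isMeagre_compl hBP).resolve_right
      (not_isMeagre_compl_of_disjoint_preimage (xorHomeomorph _).continuous
        (xorHomeomorph _).isOpenMap (disjoint_preimage_xorHomeomorph_true hUnion hProper))
  obtain ⟨e, he_mono, he⟩ := hT_meagre.exists_strictMono_notMem_of_infinite
  refine ⟨e, he_mono, fun A hA => not_not.1 fun hinf => ?_⟩
  obtain ⟨t, htI, htA⟩ := he A hinf
  exact htI (hSub _ _ htA hA)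

theorem talagrand_characterisation (I : Set (Set ℕ))
    (hEmpty : ∅ ∈ I)
    (hUnion : ∀ A B : Set ℕ, A ∈ I → B ∈ I → A ∪ B ∈ I)
    (hSub : ∀ A B : Set ℕ, A ⊆ B → B ∈ I → A ∈ I)
    (hProper : (Set.univ : Set ℕ) ∉ I)
    (hFin : ∀ A : Set ℕ, A.Finite → A ∈ I)
    (hBP : IdealHasBaireProperty I) :
    ∃ e : ℕ → ℕ, StrictMono e ∧
      ∀ A ∈ I, {i : ℕ | Set.Ico (e i) (e (i + 1)) ⊆ A}.Finite :=
  talagrand_characterisation_general I hUnion hSub hProper hFin hBP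
end

section
/- Let X be a Banach space and (x_n) a sequence in X with limsup ‖x_n‖ = ∞. Then there exists a strictly increasing u : ℕ → ℕ such that both (‖x_{u(n)}‖)_n and (‖∑_{i=1}^n x_{u(i)}‖)_n tend increasingly to infinity. -/
/-! Pick the subsequence so that `‖x (u 0)‖ > 1` and each norm exceeds three times the previous
one. The norms then dominate the earlier ones geometrically: `‖x (u n)‖ > 2 ∑_{i<n} ‖x (u i)‖ + 1`.
Writing `S n` for the `n`-th partial sum, this gives `‖S (n+1)‖ ≥ ‖x (u n)‖ - ‖S n‖ > ‖S n‖ + 1`,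
and then `‖x (u n)‖ ≤ ‖S n‖ + ‖S (n+1)‖ < ‖x (u (n+1))‖ - 1`, so both sequences of norms grow
by more than `1` at each step. -/

open Filter Finset

theorem exists_strictMono_lt_apply_succ {α : Type*} [Preorder α] {f : ℕ → α}
    (hf : ∀ M, ∃ᶠ n in atTop, M < f n) (M : α) (g : α → α) :
    ∃ u : ℕ → ℕ, StrictMono u ∧ M < f (u 0) ∧ ∀ n, g (f (u n)) < f (u (n + 1)) := by
  choose v hv_gt hv_lt using fun N M => frequently_atTop'.1 (hf M) N
  let u : ℕ → ℕ := fun n => Nat.rec (v 0 M) (fun _ k => v k (g (f k))) n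
  exact ⟨u, strictMono_nat_of_lt_succ fun _ => hv_gt _ _, hv_lt _ _, fun _ => hv_lt _ _⟩

theorem tendsto_atTop_of_add_one_lt {b : ℕ → ℝ} (h : ∀ n, b n + 1 < b (n + 1)) :
    Tendsto b atTop atTop := by
  have hlin : ∀ n : ℕ, b 0 + n ≤ b n := by
    intro n
    induction n with
    | zero => simp
    | succ n ih => push_cast; linarith [h n]
  exact tendsto_atTop_mono hlin (tendsto_atTop_add_const_left _ _ tendsto_natCast_atTop_atTop)

section Domination

variable {E : Type*} [SeminormedAddCommGroup E] {a : ℕ → E}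

theorem two_mul_sum_norm_add_one_lt (h0 : 1 < ‖a 0‖) (hstep : ∀ n, 3 * ‖a n‖ < ‖a (n + 1)‖)
    (n : ℕ) : 2 * ∑ i ∈ range n, ‖a i‖ + 1 < ‖a n‖ := by
  induction n with
  | zero => simpa using h0
  | succ n ih => rw [sum_range_succ]; linarith [hstep n]

theorem norm_sum_range_add_one_lt (hdom : ∀ n, 2 * ‖∑ i ∈ range n, a i‖ + 1 < ‖a n‖)
    (n : ℕ) : ‖∑ i ∈ range n, a i‖ + 1 < ‖∑ i ∈ range (n + 1), a i‖ := by
  rw [sum_range_succ]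
  linarith [hdom n, norm_le_add_norm_add' (∑ i ∈ range n, a i) (a n)]

theorem norm_add_one_lt_norm_succ (hdom : ∀ n, 2 * ‖∑ i ∈ range n, a i‖ + 1 < ‖a n‖)
    (n : ℕ) : ‖a n‖ + 1 < ‖a (n + 1)‖ := by
  have hsplit : ‖a n‖ ≤ ‖∑ i ∈ range (n + 1), a i‖ + ‖∑ i ∈ range n, a i‖ := by
    rw [sum_range_succ]
    exact norm_le_add_norm_add' _ _
  linarith [hdom (n + 1), norm_sum_range_add_one_lt hdom n]

end Domination

theorem exists_subseries_tendsto_atTop_general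
    {X : Type*} [NormedAddCommGroup X]
    (x : ℕ → X)
    (hlimsup : ∀ M : ℝ, ∃ᶠ n in atTop, M < ‖x n‖) :
    ∃ u : ℕ → ℕ, StrictMono u ∧
      StrictMono (fun n => ‖x (u n)‖) ∧
      Tendsto (fun n => ‖x (u n)‖) atTop atTop ∧
      StrictMono (fun n => ‖∑ i ∈ Finset.range n, x (u i)‖) ∧
      Tendsto (fun n => ‖∑ i ∈ Finset.range n, x (u i)‖) atTop atTop := by
  obtain ⟨u, hu, h0, hstep⟩ := exists_strictMono_lt_apply_succ hlimsup 1 (3 * ·)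
  have hdom : ∀ n, 2 * ‖∑ i ∈ range n, x (u i)‖ + 1 < ‖x (u n)‖ := fun n => by
    linarith [norm_sum_le (range n) (fun i => x (u i)),
      two_mul_sum_norm_add_one_lt (a := fun i => x (u i)) h0 hstep n]
  have hterm := norm_add_one_lt_norm_succ hdom
  have hsum := norm_sum_range_add_one_lt hdom
  exact ⟨u, hu, strictMono_nat_of_lt_succ fun n => by linarith [hterm n],
    tendsto_atTop_of_add_one_lt hterm,
    strictMono_nat_of_lt_succ fun n => by linarith [hsum n], tendsto_atTop_of_add_one_lt hsum⟩

theorem exists_subseries_tendsto_atTop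
    {X : Type*} [NormedAddCommGroup X] [NormedSpace ℝ X] [CompleteSpace X]
    (x : ℕ → X)
    (hlimsup : ∀ M : ℝ, ∃ᶠ n in atTop, M < ‖x n‖) :
    ∃ u : ℕ → ℕ, StrictMono u ∧
      StrictMono (fun n => ‖x (u n)‖) ∧
      Tendsto (fun n => ‖x (u n)‖) atTop atTop ∧
      StrictMono (fun n => ‖∑ i ∈ Finset.range n, x (u i)‖) ∧
      Tendsto (fun n => ‖∑ i ∈ Finset.range n, x (u i)‖) atTop atTop :=
  exists_subseries_tendsto_atTop_general x hlimsup
end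

section
/- Let X be a Banach space containing no isomorphic copy of c₀, and let ∑ x_n be a series in X which is not unconditionally convergent. Then the sets E = {s ∈ S : (∑_{i=1}^n x_{s(i)})_n is bounded} and F = {p ∈ P : (∑_{i=1}^n x_{p(i)})_n is bounded} are meager in S and P respectively. -/
open Filter

/-- `P`, the Polish space of bijections `ℕ → ℕ`. -/
abbrev BijSeq : Type := {p : ℕ → ℕ // Function.Bijective p}

/-- A Banach space contains an isomorphic copy of `c₀` if there is a continuous
linear map from `c₀ = C₀(ℕ, ℝ)` into it which is bounded below (an isomorphic
embedding). -/
def ContainsCopyOfC0 (X : Type*) [NormedAddCommGroup X] [NormedSpace ℝ X] : Prop :=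
  ∃ T : ZeroAtInftyContinuousMap ℕ ℝ →L[ℝ] X, ∃ c > (0 : ℝ),
    ∀ v : ZeroAtInftyContinuousMap ℕ ℝ, c * ‖v‖ ≤ ‖T v‖

/-- A series `∑ x n` is unconditionally convergent if every rearrangement converges. -/
def UnconditionallyConvergent {X : Type*} [NormedAddCommGroup X] (x : ℕ → X) : Prop :=
  ∀ p : Equiv.Perm ℕ, ∃ L : X,
    Tendsto (fun n => ∑ i ∈ Finset.range n, x (p i)) atTop (nhds L)

/-!
Let `A_M` be the set of sequences whose partial sums `∑_{i<n} x_{s(i)}` all have norm `≤ M`.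
It is closed, and it has empty interior: a basic neighbourhood only fixes a finite prefix of `s`,
and the prefix can be continued by an enumeration of a finite set `G` lying beyond it with
`‖∑_G x‖ > 2M`. Such `G` exist: otherwise all finite subsums of `x` are bounded, and a series
with bounded finite subsums that is not unconditionally convergent spans `c₀`
(Bessaga–Pełczyński). For the latter, the blocks `u_k` of a divergent rearrangement are bounded
away from `0` and weakly null, so Mazur's argument extracts a basic subsequence, and
`a ↦ ∑ a_k u_k` is then an isomorphic embedding of `c₀`.
-/

open Finset Function Topology

-- Up to a factor `2`, this is the bound on `‖∑ t(i) x_i‖` over sign choices `t` that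
-- characterises weakly absolutely convergent series.
def BoundedSubsums {X : Type*} [NormedAddCommGroup X] (x : ℕ → X) (M : ℝ) : Prop :=
  ∀ G : Finset ℕ, ‖∑ i ∈ G, x i‖ ≤ M

namespace BoundedSubsums

variable {X : Type*} [NormedAddCommGroup X] {x : ℕ → X} {M : ℝ}

lemma of_norm_sum_le_of_ge {N : ℕ} (h : ∀ G : Finset ℕ, (∀ i ∈ G, N ≤ i) → ‖∑ i ∈ G, x i‖ ≤ M) :
    BoundedSubsums x (M + ∑ i ∈ range N, ‖x i‖) := by
  intro G
  rw [← sum_filter_add_sum_filter_not G (· < N)]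
  refine (norm_add_le _ _).trans ?_
  rw [add_comm M]
  gcongr
  · refine (norm_sum_le _ _).trans <| sum_le_sum_of_subset_of_nonneg (fun i hi => ?_)
      fun _ _ _ => norm_nonneg _
    exact mem_range.2 (mem_filter.1 hi).2
  · exact h _ fun i hi => not_lt.1 (mem_filter.1 hi).2

lemma nonneg (hx : BoundedSubsums x M) : 0 ≤ M := by
  simpa using hx ∅

lemma blocks (hx : BoundedSubsums x M) {B : ℕ → Finset ℕ} (hB : Pairwise (Disjoint on B)) :
    BoundedSubsums (fun t => ∑ i ∈ B t, x i) M := fun T => by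
  rw [← sum_biUnion fun s _ t _ hst => hB hst]
  exact hx _

lemma comp_injective (hx : BoundedSubsums x M) {f : ℕ → ℕ} (hf : f.Injective) :
    BoundedSubsums (x ∘ f) M := fun T => by
  simpa only [comp_apply, sum_image fun _ _ _ _ h => hf h] using hx (T.image f)

lemma exists_seminormalized_blocks {y : ℕ → X} (hy : BoundedSubsums y M)
    (hS : ¬ CauchySeq fun n => ∑ i ∈ range n, y i) :
    ∃ ε > 0, ∃ w : ℕ → X, (∀ t, ε ≤ ‖w t‖) ∧ BoundedSubsums w M := by
  rw [Metric.cauchySeq_iff'] at hS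
  push Not at hS
  obtain ⟨ε, hε, h⟩ := hS
  choose next hle hdist using h
  set b : ℕ → ℕ := fun t => next^[t] 0
  have hb : ∀ t, b (t + 1) = next (b t) := fun t => iterate_succ_apply' next t 0
  have hmono : Monotone b := monotone_nat_of_le_succ fun t => hb t ▸ hle (b t)
  refine ⟨ε, hε, fun t => ∑ i ∈ Ico (b t) (b (t + 1)), y i, fun t => ?_, hy.blocks ?_⟩
  · dsimp only
    rw [sum_Ico_eq_sub _ (hmono t.le_succ), ← dist_eq_norm, hb]
    exact hdist _
  · intro s t hst
    rw [onFun, ← disjoint_coe, coe_Ico, coe_Ico]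
    exact hmono.pairwise_disjoint_on_Ico_succ hst

variable [NormedSpace ℝ X]

lemma sum_abs_apply_le (hx : BoundedSubsums x M) (f : StrongDual ℝ X) (T : Finset ℕ) :
    ∑ k ∈ T, |f (x k)| ≤ 2 * M * ‖f‖ := by
  have hf : ∀ G : Finset ℕ, |f (∑ k ∈ G, x k)| ≤ M * ‖f‖ := fun G =>
    (f.le_opNorm _).trans (by rw [mul_comm]; gcongr; exact hx G)
  have hsplit : ∑ k ∈ T, |f (x k)| = f (∑ k ∈ T with 0 ≤ f (x k), x k)
      - f (∑ k ∈ T with ¬ 0 ≤ f (x k), x k) := by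
    rw [map_sum, map_sum, ← sum_filter_add_sum_filter_not T (fun k => 0 ≤ f (x k)),
      sub_eq_add_neg, ← sum_neg_distrib]
    congr 1 <;> refine sum_congr rfl fun k hk => ?_
    · exact abs_of_nonneg (mem_filter.1 hk).2
    · exact abs_of_neg (not_le.1 (mem_filter.1 hk).2)
  rw [hsplit]
  linarith [le_abs_self (f (∑ k ∈ T with 0 ≤ f (x k), x k)), hf {k ∈ T | 0 ≤ f (x k)},
    neg_abs_le (f (∑ k ∈ T with ¬ 0 ≤ f (x k), x k)), hf {k ∈ T | ¬ 0 ≤ f (x k)}]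

lemma tendsto_apply_zero (hx : BoundedSubsums x M) (f : StrongDual ℝ X) :
    Tendsto (fun k => f (x k)) atTop (𝓝 0) := by
  have : Summable fun k => |f (x k)| :=
    summable_of_sum_le (fun _ => abs_nonneg _) (hx.sum_abs_apply_le f)
  simpa [Nat.cofinite_eq_atTop] using this.of_abs.tendsto_cofinite_zero

lemma norm_sum_smul_le (hx : BoundedSubsums x M) {T : Finset ℕ} {a : ℕ → ℝ} {c : ℝ}
    (hc : 0 ≤ c) (ha : ∀ k ∈ T, |a k| ≤ c) : ‖∑ k ∈ T, a k • x k‖ ≤ 2 * M * c := by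
  obtain ⟨f, hf1, hf⟩ := exists_dual_vector'' ℝ (∑ k ∈ T, a k • x k)
  have hM := hx.nonneg
  calc ‖∑ k ∈ T, a k • x k‖ = ∑ k ∈ T, a k * f (x k) := by
        simpa [map_sum] using hf.symm
    _ ≤ ∑ k ∈ T, c * |f (x k)| := sum_le_sum fun k hk =>
        (le_abs_self _).trans (by rw [abs_mul]; gcongr; exact ha k hk)
    _ = c * ∑ k ∈ T, |f (x k)| := (mul_sum ..).symm
    _ ≤ c * (2 * M * 1) := by gcongr; exact (hx.sum_abs_apply_le f T).trans (by gcongr)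
    _ = 2 * M * c := by ring

end BoundedSubsums

section NormedSpace

variable {X : Type*} [NormedAddCommGroup X] [NormedSpace ℝ X]

lemma exists_finset_norming (E : Submodule ℝ X) [FiniteDimensional ℝ E] {θ : ℝ} (hθ : θ < 1) :
    ∃ F : Finset (StrongDual ℝ X), (∀ f ∈ F, ‖f‖ ≤ 1) ∧ ∀ y ∈ E, ∃ f ∈ F, θ * ‖y‖ ≤ f y := by
  classical
  have hS : IsCompact (((↑) : E → X) '' Metric.sphere 0 1) :=
    (isCompact_sphere 0 1).image continuous_subtype_val
  obtain ⟨F, hF1, hFfin, hcover⟩ := hS.elim_finite_subcover_image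
    (b := {f : StrongDual ℝ X | ‖f‖ ≤ 1}) (c := fun f => {y | θ < f y})
    (fun f _ => isOpen_lt continuous_const f.continuous) <| by
      rintro _ ⟨z, hz, rfl⟩
      obtain ⟨f, hf1, hfz⟩ := exists_dual_vector ℝ (z : X) (by simp_all)
      exact Set.mem_iUnion₂.2 ⟨f, hf1.le, by simp_all⟩
  refine ⟨insert 0 hFfin.toFinset, fun f hf => ?_, fun y hy => ?_⟩
  · rcases mem_insert.1 hf with rfl | hf
    · simp
    · exact hF1 (hFfin.mem_toFinset.1 hf)
  rcases eq_or_ne y 0 with rfl | hy0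
  · exact ⟨0, mem_insert_self _ _, by simp⟩
  have hpos : 0 < ‖y‖ := norm_pos_iff.2 hy0
  have hyS : ‖y‖⁻¹ • y ∈ ((↑) : E → X) '' Metric.sphere 0 1 :=
    ⟨⟨_, E.smul_mem _ hy⟩, by simp [norm_smul, hpos.ne'], rfl⟩
  obtain ⟨f, hfF, hf⟩ := Set.mem_iUnion₂.1 (hcover hyS)
  refine ⟨f, mem_insert_of_mem (hFfin.mem_toFinset.2 hfF), ?_⟩
  rw [Set.mem_ofPred_eq, map_smul, smul_eq_mul, lt_inv_mul_iff₀ hpos] at hf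
  linarith

-- The key step of Mazur's construction of basic sequences.
lemma eventually_mul_norm_le_norm_add_smul {w : ℕ → X} {ε θ : ℝ} (hε : 0 < ε)
    (hw : ∀ t, ε ≤ ‖w t‖) (hw0 : ∀ f : StrongDual ℝ X, Tendsto (fun t => f (w t)) atTop (𝓝 0))
    (E : Submodule ℝ X) [FiniteDimensional ℝ E] (hθ : θ < 1) :
    ∀ᶠ t in atTop, ∀ y ∈ E, ∀ r : ℝ, θ * ‖y‖ ≤ ‖y + r • w t‖ := by
  obtain ⟨θ', hθθ', hθ'⟩ := exists_between hθ
  obtain ⟨F, hF1, hF⟩ := exists_finset_norming E hθ'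
  have hη : 0 < (θ' - θ) * ε / 2 := by have := sub_pos.2 hθθ'; positivity
  have hsmall : ∀ᶠ t in atTop, ∀ f ∈ F, |f (w t)| ≤ (θ' - θ) * ε / 2 :=
    (eventually_all_finset F).2 fun f _ =>
      (hw0 f).eventually (Metric.closedBall_mem_nhds (0 : ℝ) hη) |>.mono fun _ h => by
        simpa using h
  filter_upwards [hsmall] with t ht y hy r
  by_cases hr : 2 * ‖y‖ ≤ ‖r • w t‖
  · have h := norm_sub_norm_le (r • w t) (-y)
    rw [norm_neg, sub_neg_eq_add, add_comm] at h
    nlinarith [mul_le_mul_of_nonneg_right hθ.le (norm_nonneg y)]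
  obtain ⟨f, hfF, hfy⟩ := hF y hy
  have hrε : |r| * ε ≤ 2 * ‖y‖ := by
    rw [norm_smul, Real.norm_eq_abs] at hr
    nlinarith [abs_nonneg r, hw t]
  have hrf : |r * f (w t)| ≤ |r| * ((θ' - θ) * ε / 2) := by
    rw [abs_mul]; gcongr; exact ht f hfF
  have hnorm : f (y + r • w t) ≤ ‖y + r • w t‖ := (le_abs_self _).trans <|
    (f.le_opNorm _).trans (mul_le_of_le_one_left (norm_nonneg _) (hF1 f hfF))
  rw [map_add, map_smul, smul_eq_mul] at hnorm
  nlinarith [neg_abs_le (r * f (w t)), mul_le_mul_of_nonneg_right hrε (sub_pos.2 hθθ').le]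

lemma le_two_mul_of_le_one_add_half_pow_mul {s : ℕ → ℝ} (hs0 : ∀ j, 0 ≤ s j)
    (hs : ∀ j, s j ≤ (1 + (1 / 2) ^ (j + 2)) * s (j + 1)) {k m : ℕ} (hkm : k ≤ m) :
    s k ≤ 2 * s m := by
  have hprod : ∀ m, ∏ j ∈ range m, (1 + (1 / 2 : ℝ) ^ (j + 2)) ≤ 2 - (1 / 2) ^ m := by
    intro m
    induction m with
    | zero => norm_num
    | succ m ih =>
      rw [prod_range_succ]
      calc _ ≤ (2 - (1 / 2 : ℝ) ^ m) * (1 + (1 / 2) ^ (m + 2)) := by gcongr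
        _ ≤ 2 - (1 / 2) ^ (m + 1) := by
          have hq := pow_pos (one_half_pos (α := ℝ)) m
          rw [show (1 / 2 : ℝ) ^ (m + 2) = (1 / 2) ^ m / 4 by ring,
            show (1 / 2 : ℝ) ^ (m + 1) = (1 / 2) ^ m / 2 by ring]
          nlinarith
  have hchain : ∀ m, k ≤ m → s k ≤ (∏ j ∈ range m, (1 + (1 / 2 : ℝ) ^ (j + 2))) * s m := by
    intro m hkm
    induction m, hkm using Nat.le_induction with
    | base =>
      exact le_mul_of_one_le_left (hs0 k)
        (one_le_prod fun j _ => le_add_of_nonneg_right (by positivity))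
    | succ m _ ih =>
      rw [prod_range_succ, mul_assoc]
      exact ih.trans (by gcongr; exact hs m)
  calc s k ≤ _ := hchain m hkm
    _ ≤ 2 * s m := mul_le_mul_of_nonneg_right ((hprod m).trans (sub_le_self _ (by positivity)))
      (hs0 m)

lemma exists_strictMono_norm_sum_range_le_two_mul {w : ℕ → X} {ε : ℝ} (hε : 0 < ε)
    (hw : ∀ t, ε ≤ ‖w t‖) (hw0 : ∀ f : StrongDual ℝ X, Tendsto (fun t => f (w t)) atTop (𝓝 0)) :
    ∃ τ : ℕ → ℕ, StrictMono τ ∧ ∀ (a : ℕ → ℝ) {k m : ℕ}, k ≤ m →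
      ‖∑ i ∈ range k, a i • w (τ i)‖ ≤ 2 * ‖∑ i ∈ range m, a i • w (τ i)‖ := by
  classical
  have h : ∀ K j, ∃ t, K ≤ t ∧ ∀ y ∈ Submodule.span ℝ ((range K).image w : Set X), ∀ r : ℝ,
      (1 + (1 / 2 : ℝ) ^ (j + 2))⁻¹ * ‖y‖ ≤ ‖y + r • w t‖ := fun K j =>
    ((eventually_mul_norm_le_norm_add_smul hε hw hw0 _
      (inv_lt_one_of_one_lt₀ (lt_add_of_pos_right 1 (by positivity)))).and
      (eventually_ge_atTop K)).exists.imp fun _ ht => ⟨ht.2, ht.1⟩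
  choose g hgK hg using h
  -- step `j` picks `τ j ≥ K j`, almost orthogonal to all `w i` with `i < K j`
  let K : ℕ → ℕ := fun j => Nat.rec 0 (fun j Kj => g Kj j + 1) j
  let τ : ℕ → ℕ := fun j => g (K j) j
  have hKτ : ∀ j, K j ≤ τ j := fun j => hgK _ _
  have hτK : ∀ j, τ j < K (j + 1) := fun j => Nat.lt_succ_self _
  have hKmono : Monotone K := monotone_nat_of_le_succ fun j => (hKτ j).trans (hτK j).le
  refine ⟨τ, strictMono_nat_of_lt_succ fun j => (hτK j).trans_le (hKτ (j + 1)),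
    fun a k m hkm => ?_⟩
  refine le_two_mul_of_le_one_add_half_pow_mul (s := fun n => ‖∑ i ∈ range n, a i • w (τ i)‖)
    (fun _ => norm_nonneg _) (fun j => ?_) hkm
  have hmem : ∑ i ∈ range j, a i • w (τ i) ∈ Submodule.span ℝ ((range (K j)).image w : Set X) :=
    Submodule.sum_mem _ fun i hi => Submodule.smul_mem _ _ <| Submodule.subset_span <|
      mem_coe.2 <| mem_image_of_mem w <| mem_range.2 <| (hτK i).trans_le (hKmono (mem_range.1 hi))
  have := hg (K j) j _ hmem (a j)
  rw [sum_range_succ]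
  rwa [inv_mul_le_iff₀ (by positivity)] at this

lemma BoundedSubsums.summable_smul [CompleteSpace X] {u : ℕ → X} {M : ℝ}
    (hu : BoundedSubsums u M) {a : ℕ → ℝ} (ha : Tendsto a atTop (𝓝 0)) :
    Summable fun k => a k • u k := by
  have hM := hu.nonneg
  refine summable_iff_vanishing_norm.2 fun η hη => ?_
  obtain ⟨N, hN⟩ := Metric.tendsto_atTop.1 ha (η / (2 * M + 1)) (by positivity)
  refine ⟨range N, fun T hT =>
    (hu.norm_sum_smul_le (c := η / (2 * M + 1)) (by positivity) fun k hk => ?_).trans_lt ?_⟩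
  · have : N ≤ k := not_lt.1 fun h => disjoint_left.1 hT hk (mem_range.2 h)
    simpa [Real.dist_eq] using (hN k this).le
  · rw [mul_div_assoc', div_lt_iff₀ (by positivity)]
    nlinarith

lemma containsCopyOfC0_of_basic [CompleteSpace X] {u : ℕ → X} {M ε : ℝ}
    (hu : BoundedSubsums u M) (hε : 0 < ε) (huε : ∀ k, ε ≤ ‖u k‖)
    (hbasic : ∀ (a : ℕ → ℝ) {k m : ℕ}, k ≤ m →
      ‖∑ i ∈ range k, a i • u i‖ ≤ 2 * ‖∑ i ∈ range m, a i • u i‖) :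
    ContainsCopyOfC0 X := by
  have hcoef : ∀ (a : ℕ → ℝ) {j m : ℕ}, j < m → ε * |a j| ≤ 4 * ‖∑ i ∈ range m, a i • u i‖ := by
    intro a j m hjm
    have h : a j • u j = ∑ i ∈ range (j + 1), a i • u i - ∑ i ∈ range j, a i • u i := by
      rw [sum_range_succ, add_sub_cancel_left]
    calc ε * |a j| ≤ ‖a j • u j‖ := by
          rw [norm_smul, Real.norm_eq_abs, mul_comm]; gcongr; exact huε j
      _ ≤ ‖∑ i ∈ range (j + 1), a i • u i‖ + ‖∑ i ∈ range j, a i • u i‖ := by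
          rw [h]; exact norm_sub_le _ _
      _ ≤ 4 * ‖∑ i ∈ range m, a i • u i‖ := by
          linarith [hbasic a (show j + 1 ≤ m from hjm), hbasic a hjm.le]
  have hsum : ∀ v : ZeroAtInftyContinuousMap ℕ ℝ, Summable fun k => v k • u k := fun v =>
    hu.summable_smul <| by
      simpa [cocompact_eq_cofinite, Nat.cofinite_eq_atTop] using zero_at_infty v
  have hv : ∀ (v : ZeroAtInftyContinuousMap ℕ ℝ) k, |v k| ≤ ‖v‖ := fun v k => by
    simpa [ZeroAtInftyContinuousMap.norm_toBCF_eq_norm] using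
      BoundedContinuousFunction.norm_coe_le_norm v.toBCF k
  let T : ZeroAtInftyContinuousMap ℕ ℝ →ₗ[ℝ] X :=
    { toFun := fun v => ∑' k, v k • u k
      map_add' := fun v v' => by simpa [add_smul] using (hsum v).tsum_add (hsum v')
      map_smul' := fun c v => by simpa [smul_smul] using (hsum v).tsum_const_smul c }
  have hT : ∀ v, Tendsto (fun m => ∑ i ∈ range m, v i • u i) atTop (𝓝 (T v)) := fun v =>
    (hsum v).hasSum.tendsto_sum_nat
  have hTle : ∀ v, ‖T v‖ ≤ 2 * M * ‖v‖ := fun v =>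
    le_of_tendsto (hT v).norm <| Eventually.of_forall fun _ =>
      hu.norm_sum_smul_le (norm_nonneg v) fun k _ => hv v k
  refine ⟨T.mkContinuous (2 * M) hTle, ε / 4, by positivity, fun v => ?_⟩
  have hcoefT : ∀ j, |v j| ≤ 4 / ε * ‖T v‖ := fun j => by
    rw [div_mul_eq_mul_div, le_div_iff₀ hε, mul_comm]
    exact ge_of_tendsto ((hT v).norm.const_mul 4) ((eventually_gt_atTop j).mono fun m => hcoef v)
  have hvT : ‖v‖ ≤ 4 / ε * ‖T v‖ := by
    rw [← ZeroAtInftyContinuousMap.norm_toBCF_eq_norm]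
    exact (BoundedContinuousFunction.norm_le (by positivity)).2 hcoefT
  rw [LinearMap.mkContinuous_apply]
  calc ε / 4 * ‖v‖ ≤ ε / 4 * (4 / ε * ‖T v‖) := by gcongr
    _ = ‖T v‖ := by field_simp

lemma BoundedSubsums.containsCopyOfC0 [CompleteSpace X] {x : ℕ → X} {M : ℝ}
    (hx : BoundedSubsums x M) (hnuc : ¬ UnconditionallyConvergent x) : ContainsCopyOfC0 X := by
  unfold UnconditionallyConvergent at hnuc
  push Not at hnuc
  obtain ⟨p, hp⟩ := hnuc
  have hS : ¬ CauchySeq fun n => ∑ i ∈ range n, (x ∘ p) i := fun h =>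
    let ⟨L, hL⟩ := cauchySeq_tendsto_of_complete h
    hp L hL
  obtain ⟨ε, hε, w, hwε, hw⟩ := (hx.comp_injective p.injective).exists_seminormalized_blocks hS
  obtain ⟨τ, hτ, hbasic⟩ :=
    exists_strictMono_norm_sum_range_le_two_mul hε hwε hw.tendsto_apply_zero
  exact containsCopyOfC0_of_basic (hw.comp_injective hτ.injective) hε (fun k => hwε (τ k)) hbasic

lemma exists_finset_lt_norm_sum [CompleteSpace X] (hX : ¬ ContainsCopyOfC0 X) {x : ℕ → X}
    (hx : ¬ UnconditionallyConvergent x) (M : ℝ) (N : ℕ) :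
    ∃ G : Finset ℕ, (∀ i ∈ G, N ≤ i) ∧ M < ‖∑ i ∈ G, x i‖ := by
  by_contra! h
  exact hX ((BoundedSubsums.of_norm_sum_le_of_ge h).containsCopyOfC0 hx)

end NormedSpace

lemma exists_cylinder_subset_of_mem_nhds {Q : (ℕ → ℕ) → Prop} {A : Set {f : ℕ → ℕ // Q f}}
    {s : {f : ℕ → ℕ // Q f}} (h : A ∈ 𝓝 s) :
    ∃ k, ∀ t : {f : ℕ → ℕ // Q f}, t.1 ∈ PiNat.cylinder s.1 k → t ∈ A := by
  rw [nhds_subtype_eq_comap, mem_comap] at h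
  obtain ⟨u, hu, huA⟩ := h
  obtain ⟨_, ⟨y, k, rfl⟩, hs, hsub⟩ :=
    (PiNat.isTopologicalBasis_cylinders fun _ => ℕ).mem_nhds_iff.1 hu
  exact ⟨k, fun t ht => huA (hsub (PiNat.mem_cylinder_iff_eq.1 hs ▸ ht))⟩

lemma isMeagre_setOf_bounded_partialSums {X : Type*} [NormedAddCommGroup X]
    {Q : (ℕ → ℕ) → Prop} {x : ℕ → X}
    (h : ∀ (s : {f : ℕ → ℕ // Q f}) (k : ℕ) (M : ℝ), ∃ t : {f : ℕ → ℕ // Q f},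
      t.1 ∈ PiNat.cylinder s.1 k ∧ ∃ m ≥ k, M < ‖∑ i ∈ Ico k m, x (t.1 i)‖) :
    IsMeagre {s : {f : ℕ → ℕ // Q f} | ∃ M : ℝ, ∀ n, ‖∑ i ∈ range n, x (s.1 i)‖ ≤ M} := by
  let A : ℕ → Set {f : ℕ → ℕ // Q f} := fun M => {s | ∀ n, ‖∑ i ∈ range n, x (s.1 i)‖ ≤ M}
  have hclosed : ∀ M, IsClosed (A M) := fun M => by
    simp only [A, Set.ofPred_forall]
    exact isClosed_iInter fun n => isClosed_le (continuous_finsetSum _ fun i _ =>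
      continuous_of_discreteTopology.comp ((continuous_apply i).comp continuous_subtype_val)).norm
      continuous_const
  have hint : ∀ M, interior (A M) = ∅ := fun M => by
    refine Set.eq_empty_iff_forall_notMem.2 fun s hs => ?_
    obtain ⟨k, hk⟩ := exists_cylinder_subset_of_mem_nhds (mem_interior_iff_mem_nhds.1 hs)
    obtain ⟨t, ht, m, hkm, hbig⟩ := h s k (2 * M)
    rw [sum_Ico_eq_sub _ hkm] at hbig
    linarith [norm_sub_le (∑ i ∈ range m, x (t.1 i)) (∑ i ∈ range k, x (t.1 i)),
      hk t ht m, hk t ht k]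
  refine (isMeagre_iUnion fun M => ((hclosed M).isNowhereDense_iff.2 (hint M)).isMeagre).mono ?_
  rintro s ⟨M, hM⟩
  exact Set.mem_iUnion.2 ⟨⌈M⌉₊, fun n => (hM n).trans (Nat.le_ceil M)⟩

lemma exists_strictMono_mem_cylinder_image_Ico {s : ℕ → ℕ} (hs : StrictMono s) (k : ℕ)
    {G : Finset ℕ} (hG : ∀ g ∈ G, s k ≤ g) :
    ∃ t : ℕ → ℕ, StrictMono t ∧ t ∈ PiNat.cylinder s k ∧ (Ico k (k + #G)).image t = G := by
  set B := s k + G.sup id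
  let e := G.orderEmbOfFin rfl
  have heB : ∀ j, e j ≤ B := fun j =>
    (le_sup (f := id) (G.orderEmbOfFin_mem rfl j)).trans le_add_self
  let u : ℕ → ℕ := fun j => if h : j < #G then e ⟨j, h⟩ else B + j
  have hu : StrictMono u := strictMono_nat_of_lt_succ fun j => by
    rcases lt_trichotomy (j + 1) #G with h | h | h
    · simp only [u, dif_pos h, dif_pos (show j < #G by omega)]
      exact e.strictMono (Fin.mk_lt_mk.2 j.lt_succ_self)
    · simp only [u, dif_pos (show j < #G by omega), dif_neg (show ¬ j + 1 < #G by omega)]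
      have := heB ⟨j, by omega⟩
      omega
    · simp only [u, dif_neg (show ¬ j < #G by omega), dif_neg (show ¬ j + 1 < #G by omega)]
      omega
  have hu0 : s k ≤ u 0 := by
    by_cases h : 0 < #G
    · simp only [u, dif_pos h]; exact hG _ (G.orderEmbOfFin_mem rfl _)
    · simp only [u, dif_neg h]; omega
  let t : ℕ → ℕ := fun i => if i < k then s i else u (i - k)
  have ht : StrictMono t := strictMono_nat_of_lt_succ fun i => by
    rcases lt_trichotomy (i + 1) k with h | h | h
    · simp only [t, if_pos h, if_pos (show i < k by omega)]; exact hs i.lt_succ_self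
    · simp only [t, if_pos (show i < k by omega), h, lt_irrefl, if_false, Nat.sub_self]
      exact (hs (show i < k by omega)).trans_le hu0
    · simp only [t, if_neg (show ¬ i < k by omega), if_neg (show ¬ i + 1 < k by omega)]
      exact hu (by omega)
  refine ⟨t, ht, fun i hi => if_pos hi, eq_of_subset_of_card_le (fun g hg => ?_) ?_⟩
  · obtain ⟨i, hi, rfl⟩ := mem_image.1 hg
    rw [mem_Ico] at hi
    simp only [t, u, if_neg (show ¬ i < k by omega), dif_pos (show i - k < #G by omega)]
    exact G.orderEmbOfFin_mem rfl _
  · rw [card_image_of_injective _ ht.injective]; simp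

lemma exists_bijective_mem_cylinder_image_Ico {q : ℕ → ℕ} (hq : q.Bijective) (k : ℕ)
    {G : Finset ℕ} (hG : ∀ i < k, q i ∉ G) :
    ∃ t : ℕ → ℕ, t.Bijective ∧ t ∈ PiNat.cylinder q k ∧ (Ico k (k + #G)).image t = G := by
  classical
  let A := Ico k (k + #G)
  let e : A ≃ G := equivOfCardEq (by simp [A])
  let qe := Equiv.ofBijective q hq
  have hqe : ∀ y, q (qe.symm y) = y := qe.apply_symm_apply
  obtain ⟨σ, hσ⟩ := Equiv.Perm.exists_extending_pair
    (Sum.elim (fun i : range k => (i : ℕ)) (fun a : A => (a : ℕ)))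
    (Sum.elim (fun i : range k => (i : ℕ)) (fun a : A => qe.symm (e a)))
    (Subtype.val_injective.sumElim Subtype.val_injective fun i a h => by
      have := mem_range.1 i.2; have := mem_Ico.1 a.2; omega)
    (Subtype.val_injective.sumElim (qe.symm.injective.comp (Subtype.val_injective.comp e.injective))
      fun i a h => hG i (mem_range.1 i.2) (by rw [h, hqe]; exact (e a).2))
  have hσA : ∀ a : A, q (σ a) = e a := fun a => (congrArg q (hσ (.inr a))).trans (hqe _)
  refine ⟨q ∘ σ, hq.comp σ.bijective, fun i hi => congrArg q (hσ (.inl ⟨i, mem_range.2 hi⟩)),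
    eq_of_subset_of_card_le (fun g hg => ?_) ?_⟩
  · obtain ⟨i, hi, rfl⟩ := mem_image.1 hg
    exact (congrArg (· ∈ G) (hσA ⟨i, hi⟩)).mpr (e _).2
  · rw [card_image_of_injective _ (hq.1.comp σ.injective)]; simp

theorem E_and_F_meager_of_no_c0
    {X : Type*} [NormedAddCommGroup X] [NormedSpace ℝ X] [CompleteSpace X]
    (hX : ¬ ContainsCopyOfC0 X)
    (x : ℕ → X) (hx : ¬ UnconditionallyConvergent x) :
    IsMeagre {s : IncSeq | ∃ M : ℝ, ∀ n : ℕ, ‖∑ i ∈ Finset.range n, x (s.1 i)‖ ≤ M} ∧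
    IsMeagre {p : BijSeq | ∃ M : ℝ, ∀ n : ℕ, ‖∑ i ∈ Finset.range n, x (p.1 i)‖ ≤ M} := by
  have hbig := exists_finset_lt_norm_sum hX hx
  constructor
  · refine isMeagre_setOf_bounded_partialSums fun s k M => ?_
    obtain ⟨G, hGk, hGM⟩ := hbig M (s.1 k)
    obtain ⟨t, ht, hts, himg⟩ := exists_strictMono_mem_cylinder_image_Ico s.2 k hGk
    refine ⟨⟨t, ht⟩, hts, k + #G, by omega, ?_⟩
    rwa [← himg, sum_image ht.injective.injOn] at hGM
  · refine isMeagre_setOf_bounded_partialSums fun q k M => ?_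
    obtain ⟨G, hGk, hGM⟩ := hbig M ((range k).sup q.1 + 1)
    have hG : ∀ i < k, q.1 i ∉ G := fun i hi hiG => by
      have := le_sup (f := q.1) (mem_range.2 hi)
      have := hGk _ hiG
      omega
    obtain ⟨t, ht, htq, himg⟩ := exists_bijective_mem_cylinder_image_Ico q.2 k hG
    refine ⟨⟨t, ht⟩, htq, k + #G, by omega, ?_⟩
    rwa [← himg, sum_image ht.1.injOn] at hGM
end

section
/- Let X be a Banach space containing an isomorphic copy of c₀. Then there exists a series ∑ x_n in X which is not unconditionally convergent, but such that every subseries and every rearrangement of ∑ x_n has bounded partial sums (so E = S and F = P). -/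
open Filter

/-!
Take `xₙ = T eₙ`, the images of the unit vectors of `c₀`. Since `‖T v‖ ≥ c‖v‖`, the terms stay
at distance `≥ c` from `0`, so no rearrangement converges. On the other hand a sum of distinct
unit vectors has sup norm at most `1`, so every partial sum along an injective reindexing has
norm at most `‖T‖`.
-/

noncomputable def c0UnitVec (n : ℕ) : ZeroAtInftyContinuousMap ℕ ℝ where
  toFun m := if m = n then 1 else 0
  continuous_toFun := continuous_of_discreteTopology
  zero_at_infty' := by
    rw [cocompact_eq_cofinite]
    refine tendsto_const_nhds.congr' ?_
    filter_upwards [eventually_cofinite_ne n] with m hm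
    simp [hm]

theorem c0UnitVec_apply (n m : ℕ) : c0UnitVec n m = if m = n then 1 else 0 := rfl

theorem ZeroAtInftyContinuousMap.finset_sum_apply {ι α β : Type*} [TopologicalSpace α]
    [TopologicalSpace β] [AddCommMonoid β] [ContinuousAdd β] (s : Finset ι)
    (f : ι → ZeroAtInftyContinuousMap α β) (a : α) : (∑ i ∈ s, f i) a = ∑ i ∈ s, f i a :=
  map_sum (⟨⟨fun g => g a, rfl⟩, fun _ _ => rfl⟩ : ZeroAtInftyContinuousMap α β →+ β) f s

theorem one_le_norm_c0UnitVec (n : ℕ) : 1 ≤ ‖c0UnitVec n‖ := by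
  rw [← ZeroAtInftyContinuousMap.norm_toBCF_eq_norm]
  simpa [c0UnitVec_apply] using (c0UnitVec n).toBCF.norm_coe_le_norm n

theorem norm_sum_c0UnitVec_le_one (s : Finset ℕ) : ‖∑ i ∈ s, c0UnitVec i‖ ≤ 1 := by
  rw [← ZeroAtInftyContinuousMap.norm_toBCF_eq_norm, BoundedContinuousFunction.norm_le zero_le_one]
  intro m
  change ‖(∑ i ∈ s, c0UnitVec i) m‖ ≤ 1
  rw [ZeroAtInftyContinuousMap.finset_sum_apply]
  simp only [c0UnitVec_apply, Finset.sum_ite_eq]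
  split_ifs <;> simp

theorem UnconditionallyConvergent.tendsto_zero {X : Type*} [NormedAddCommGroup X] {x : ℕ → X}
    (hx : UnconditionallyConvergent x) : Tendsto x atTop (nhds 0) := by
  obtain ⟨L, hL⟩ := hx (Equiv.refl ℕ)
  simpa [Finset.sum_range_succ] using ((tendsto_add_atTop_iff_nat 1).2 hL).sub hL

theorem norm_sum_map_c0UnitVec_comp_le {X : Type*} [NormedAddCommGroup X] [NormedSpace ℝ X]
    (T : ZeroAtInftyContinuousMap ℕ ℝ →L[ℝ] X) {s : ℕ → ℕ} (hs : Function.Injective s) (n : ℕ) :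
    ‖∑ i ∈ Finset.range n, T (c0UnitVec (s i))‖ ≤ ‖T‖ := by
  rw [← map_sum, ← Finset.sum_image hs.injOn, ← mul_one ‖T‖]
  exact T.le_opNorm_of_le (norm_sum_c0UnitVec_le_one _)

theorem exists_bad_series_of_contains_c0_general
    {X : Type*} [NormedAddCommGroup X] [NormedSpace ℝ X]
    (hX : ContainsCopyOfC0 X) :
    ∃ x : ℕ → X, ¬ UnconditionallyConvergent x ∧
      (∀ s : ℕ → ℕ, StrictMono s →
        ∃ M : ℝ, ∀ n : ℕ, ‖∑ i ∈ Finset.range n, x (s i)‖ ≤ M) ∧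
      (∀ p : ℕ → ℕ, Function.Bijective p →
        ∃ M : ℝ, ∀ n : ℕ, ‖∑ i ∈ Finset.range n, x (p i)‖ ≤ M) := by
  obtain ⟨T, c, hc, hT⟩ := hX
  refine ⟨fun n => T (c0UnitVec n), fun h => ?_,
    fun s hs => ⟨‖T‖, norm_sum_map_c0UnitVec_comp_le T hs.injective⟩,
    fun p hp => ⟨‖T‖, norm_sum_map_c0UnitVec_comp_le T hp.injective⟩⟩
  have hc_le : ∀ n, c ≤ ‖T (c0UnitVec n)‖ := fun n =>
    (le_mul_of_one_le_right hc.le (one_le_norm_c0UnitVec n)).trans (hT _)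
  have h_norm_zero := tendsto_zero_iff_norm_tendsto_zero.1 h.tendsto_zero
  exact hc.not_ge (ge_of_tendsto' h_norm_zero hc_le)

theorem exists_bad_series_of_contains_c0
    {X : Type*} [NormedAddCommGroup X] [NormedSpace ℝ X] [CompleteSpace X]
    (hX : ContainsCopyOfC0 X) :
    ∃ x : ℕ → X, ¬ UnconditionallyConvergent x ∧
      (∀ s : ℕ → ℕ, StrictMono s →
        ∃ M : ℝ, ∀ n : ℕ, ‖∑ i ∈ Finset.range n, x (s i)‖ ≤ M) ∧
      (∀ p : ℕ → ℕ, Function.Bijective p →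
        ∃ M : ℝ, ∀ n : ℕ, ‖∑ i ∈ Finset.range n, x (p i)‖ ≤ M) :=
  exists_bad_series_of_contains_c0_general hX
end
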